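/- Let A, E ⊂ Ω with cap_p(A,Ω) > 0 and cap_p(E,Ω) < ∞, and let u_E be the capacitary potential of E in Ω. Then inf_A u_E ≤ (cap_p(E,Ω)/cap_p(A,Ω))^{1/(p-1)}. -/

import Mathlib

open MeasureTheory Metric Set
open scoped ENNReal NNReal

/-- `g` is a (genuine) upper gradient of `u`: along every rectifiable curve,
parameterized by arc length as a `1`-Lipschitz map on `[0,L]`, the fundamental
theorem of calculus estimate holds. -/
def IsUpperGradient {X : Type*} [MetricSpace X] (u : X → ℝ) (g : X → ℝ) : Prop :=
  ∀ (L : ℝ) (γ : ℝ → X), 0 ≤ L → LipschitzOnWith 1 γ (Set.Icc 0 L) →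
    |u (γ L) - u (γ 0)| ≤ ∫ t in (0:ℝ)..L, g (γ t)

/-- The variational `p`-capacity of `E` inside the open set `Ω`. -/
noncomputable def varCap {X : Type*} [MetricSpace X] [MeasurableSpace X] (p : ℝ)
    (μ : Measure X) (E Ω : Set X) : ℝ≥0∞ :=
  ⨅ (u : X → ℝ) (_ : (∀ x ∈ E, u x = 1) ∧ ∀ x ∉ Ω, u x = 0)
    (g : X → ℝ) (_ : IsUpperGradient u g ∧ ∀ x, 0 ≤ g x),
      ∫⁻ x in Ω, ENNReal.ofReal (g x ^ p) ∂μ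

/-- The measure `μ` is doubling (and nondegenerate on balls). -/
def IsDoubling {X : Type*} [MetricSpace X] [MeasurableSpace X] (μ : Measure X) : Prop :=
  ∃ C : ℝ≥0∞, ∀ (x : X) (r : ℝ), 0 < r →
    0 < μ (ball x r) ∧ μ (ball x r) < ⊤ ∧ μ (ball x (2*r)) ≤ C * μ (ball x r)

/-- `X` supports a `p`-Poincaré inequality. -/
def SupportsPoincare {X : Type*} [MetricSpace X] [MeasurableSpace X] (p : ℝ)
    (μ : Measure X) : Prop :=
  ∃ (C lam : ℝ), 0 < C ∧ 1 ≤ lam ∧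
    ∀ (x : X) (r : ℝ), 0 < r → ∀ f g : X → ℝ, IsUpperGradient f g → (∀ y, 0 ≤ g y) →
      ⨍ y in ball x r, |f y - ⨍ z in ball x r, f z ∂μ| ∂μ ≤
        C * (2*r) * (⨍ y in ball x (lam*r), g y ^ p ∂μ) ^ (1/p)

/-!
Let `m = inf_A u > 0`. A truncation `c₁ min(u, M) + c₂ (u - M)₊` of `u` has the upper gradient
`c₁ g` on `{u ≤ M}` and `c₂ g` on `{u > M}`, so its energy is `c₁ᵖ φ(M) + c₂ᵖ ψ(M)`, where `φ(M)`
and `ψ(M)` are the energies of `u` on these two sets. For `0 < M < 1` the truncations with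
`c₁ M + c₂ (1 - M) = 1` are admissible for `E`, and `u` itself is the member `c₁ = c₂ = 1` of this
one-parameter family; minimality of `u` makes the derivative along the family vanish, which gives
`φ(M) = M cap_p(E, Ω)`; for `M ≥ 1` simply `φ(M) ≤ cap_p(E, Ω)`. The truncation `min(u, m) / m` is admissible for `A`, hence
`cap_p(A, Ω) ≤ m⁻ᵖ φ(m) ≤ m^(1-p) cap_p(E, Ω)`.
-/

section RealLine

variable {f ρ : ℝ → ℝ} {s : Set ℝ} {a b L M : ℝ}

theorem intervalIntegral_indicator_eq_of_Ioo_subset (hab : a ≤ b) (hs : Ioo a b ⊆ s) :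
    ∫ t in a..b, s.indicator ρ t = ∫ t in a..b, ρ t := by
  refine intervalIntegral.integral_congr_ae ?_
  filter_upwards [Measure.ae_ne volume b] with t htb ht
  rw [uIoc_of_le hab] at ht
  exact indicator_of_mem (hs ⟨ht.1, ht.2.lt_of_ne htb⟩) ρ

theorem IntervalIntegrable.indicator₀ (hρ : IntervalIntegrable ρ volume a b)
    (hs : NullMeasurableSet s (volume.restrict (uIoc a b))) :
    IntervalIntegrable (s.indicator ρ) volume a b := by
  rw [intervalIntegrable_iff] at hρ ⊢
  exact hρ.indicator₀ hs

theorem abs_min_sub_min_le_integral_indicator (hL : 0 ≤ L) (hρ0 : ∀ t, 0 ≤ ρ t)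
    (hf : ContinuousOn f (Icc 0 L))
    (hfρ : ∀ s t, 0 ≤ s → s ≤ t → t ≤ L → |f t - f s| ≤ ∫ r in s..t, ρ r)
    (hs : {t | f t < M} ⊆ s) (hψ : IntervalIntegrable (s.indicator ρ) volume 0 L) :
    |min (f L) M - min (f 0) M| ≤ ∫ t in 0..L, s.indicator ρ t := by
  set ψ := s.indicator ρ
  have hψ0 : ∀ a b, a ≤ b → 0 ≤ ∫ t in a..b, ψ t := fun a b hab =>
    intervalIntegral.integral_nonneg hab fun t _ => indicator_nonneg (fun t _ => hρ0 t) t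
  have hψ_sub : ∀ a b, 0 ≤ a → a ≤ b → b ≤ L → IntervalIntegrable ψ volume a b :=
    fun a b ha hab hb =>
      hψ.mono_set (by rw [uIcc_of_le hab, uIcc_of_le hL]; exact Icc_subset_Icc ha hb)
  have below : ∀ a b, 0 ≤ a → a ≤ b → b ≤ L → (∀ r ∈ Ioo a b, f r < M) →
      |f b - f a| ≤ ∫ t in a..b, ψ t := fun a b ha hab hb hfM => by
    rw [intervalIntegral_indicator_eq_of_Ioo_subset hab fun r hr => hs (hfM r hr)]
    exact hfρ a b ha hab hb
  -- Cut `[0, L]` at the first and the last time `f` reaches `M`.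
  set T := Icc 0 L ∩ f ⁻¹' Ici M
  rcases T.eq_empty_or_nonempty with hT | hT
  · have hlt : ∀ t ∈ Icc 0 L, f t < M := fun t ht => not_le.1 fun h => hT.subset ⟨ht, h⟩
    rw [min_eq_left (hlt L ⟨hL, le_rfl⟩).le, min_eq_left (hlt 0 ⟨le_rfl, hL⟩).le]
    exact below 0 L le_rfl hL le_rfl fun r hr => hlt r (Ioo_subset_Icc_self hr)
  have hTc : IsClosed T := hf.preimage_isClosed_of_isClosed isClosed_Icc isClosed_Ici
  have hTb : BddBelow T := bddBelow_Icc.mono inter_subset_left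
  have hTa : BddAbove T := bddAbove_Icc.mono inter_subset_left
  obtain ⟨⟨h₁0, h₁L⟩, h₁M : M ≤ f (sInf T)⟩ := hTc.csInf_mem hT hTb
  obtain ⟨⟨h₂0, h₂L⟩, h₂M : M ≤ f (sSup T)⟩ := hTc.csSup_mem hT hTa
  have h₁₂ : sInf T ≤ sSup T := csInf_le_csSup hT hTb hTa
  have first : M - f 0 ≤ ∫ t in 0..sInf T, ψ t := by
    refine (sub_le_sub_right h₁M _).trans ((le_abs_self _).trans ?_)
    exact below 0 (sInf T) le_rfl h₁0 h₁L fun r hr =>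
      not_le.1 fun h => hr.2.not_ge (csInf_le hTb ⟨⟨hr.1.le, hr.2.le.trans h₁L⟩, h⟩)
  have last : M - f L ≤ ∫ t in sSup T..L, ψ t := by
    refine (sub_le_sub_right h₂M _).trans (((le_abs_self _).trans_eq (abs_sub_comm _ _)).trans ?_)
    exact below (sSup T) L h₂0 h₂L le_rfl fun r hr =>
      not_le.1 fun h => hr.1.not_ge (le_csSup hTa ⟨⟨h₂0.trans hr.1.le, hr.2.le⟩, h⟩)
  rw [← intervalIntegral.integral_add_adjacent_intervals (hψ_sub _ _ le_rfl h₂0 h₂L)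
      (hψ_sub _ _ h₂0 h₂L le_rfl),
    ← intervalIntegral.integral_add_adjacent_intervals (hψ_sub _ _ le_rfl h₁0 h₁L)
      (hψ_sub _ _ h₁0 h₁₂ h₂L), abs_sub_le_iff]
  have := hψ0 _ _ h₁0
  have := hψ0 _ _ h₁₂
  have := hψ0 _ _ h₂L
  rcases min_cases (f 0) M with h0 | h0 <;> rcases min_cases (f L) M with hL' | hL' <;>
    constructor <;> linarith [h0.1, h0.2, hL'.1, hL'.2]

theorem abs_truncation_sub_le_integral (hL : 0 ≤ L) (hρ0 : ∀ t, 0 ≤ ρ t)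
    (hρ : IntervalIntegrable ρ volume 0 L) (hf : ContinuousOn f (Icc 0 L))
    (hfρ : ∀ s t, 0 ≤ s → s ≤ t → t ≤ L → |f t - f s| ≤ ∫ r in s..t, ρ r)
    {c₁ c₂ : ℝ} (hc₁ : 0 ≤ c₁) (hc₂ : 0 ≤ c₂) :
    |(c₁ * min (f L) M + c₂ * max (f L - M) 0) - (c₁ * min (f 0) M + c₂ * max (f 0 - M) 0)|
      ≤ ∫ t in 0..L, (if f t ≤ M then c₁ else c₂) * ρ t := by
  have hfm : AEMeasurable f (volume.restrict (uIoc 0 L)) :=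
    (hf.mono (uIoc_of_le hL ▸ Ioc_subset_Icc_self)).aemeasurable measurableSet_uIoc
  have hle : IntervalIntegrable ({t | f t ≤ M}.indicator ρ) volume 0 L :=
    hρ.indicator₀ (nullMeasurableSet_le hfm aemeasurable_const)
  have hgt : IntervalIntegrable ({t | M < f t}.indicator ρ) volume 0 L :=
    hρ.indicator₀ (nullMeasurableSet_lt aemeasurable_const hfm)
  have hmin := abs_min_sub_min_le_integral_indicator (s := {t | f t ≤ M}) hL hρ0 hf hfρ
    (fun t (ht : f t < M) => ht.le) hle
  have hmax : |max (f L - M) 0 - max (f 0 - M) 0| ≤ ∫ t in 0..L, {t | M < f t}.indicator ρ t := by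
    have hneg : ∀ x, max (x - M) 0 = -min (-x) (-M) - M := fun x => by
      rcases le_total x M with h | h
      · rw [max_eq_right (by linarith), min_eq_right (by linarith)]; ring
      · rw [max_eq_left (by linarith), min_eq_left (by linarith)]; ring
    rw [hneg, hneg, abs_sub_comm, show ∀ a b : ℝ, -a - M - (-b - M) = b - a by intros; ring]
    exact abs_min_sub_min_le_integral_indicator (f := fun t => -f t) hL hρ0 hf.neg
      (fun s t hs hst htL => by simpa only [neg_sub_neg, abs_sub_comm] using hfρ s t hs hst htL)
      (fun t (ht : -f t < -M) => (neg_lt_neg_iff.1 ht : M < f t)) hgt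
  have hpiece : ∀ t, (if f t ≤ M then c₁ else c₂) * ρ t
      = c₁ * {t | f t ≤ M}.indicator ρ t + c₂ * {t | M < f t}.indicator ρ t := fun t => by
    by_cases h : f t ≤ M
    · simp [h, not_lt.2 h]
    · simp [h, not_le.1 h]
  simp_rw [hpiece]
  rw [intervalIntegral.integral_add (hle.const_mul c₁) (hgt.const_mul c₂),
    intervalIntegral.integral_const_mul, intervalIntegral.integral_const_mul]
  calc _ = |c₁ * (min (f L) M - min (f 0) M) + c₂ * (max (f L - M) 0 - max (f 0 - M) 0)| := by
        ring_nf
    _ ≤ c₁ * |min (f L) M - min (f 0) M| + c₂ * |max (f L - M) 0 - max (f 0 - M) 0| := by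
        refine (abs_add_le _ _).trans_eq ?_
        rw [abs_mul, abs_mul, abs_of_nonneg hc₁, abs_of_nonneg hc₂]
    _ ≤ _ := by gcongr

end RealLine

section UpperGradient

variable {X : Type*} [MetricSpace X] {u g : X → ℝ} {L : ℝ} {γ : ℝ → X}

theorem IsUpperGradient.abs_sub_le_integral (hug : IsUpperGradient u g)
    (hγ : LipschitzOnWith 1 γ (Icc 0 L)) {s t : ℝ} (hs : 0 ≤ s) (hst : s ≤ t) (htL : t ≤ L) :
    |u (γ t) - u (γ s)| ≤ ∫ r in s..t, g (γ r) := by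
  have hlip : LipschitzOnWith 1 (fun r => γ (s + r)) (Icc 0 (t - s)) := by
    have := hγ.comp (isometry_add_left s).lipschitz.lipschitzOnWith
      fun r (hr : r ∈ Icc 0 (t - s)) => ⟨by linarith [hr.1], by linarith [hr.2]⟩
    rw [mul_one] at this
    exact this
  have h := hug (t - s) (fun r => γ (s + r)) (by linarith) hlip
  rwa [intervalIntegral.integral_comp_add_left (fun r => g (γ r)) s, add_zero,
    add_sub_cancel] at h

theorem IsUpperGradient.continuousOn_comp (hug : IsUpperGradient u g) (hL : 0 ≤ L)
    (hγ : LipschitzOnWith 1 γ (Icc 0 L)) (hg : IntervalIntegrable (fun r => g (γ r)) volume 0 L) :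
    ContinuousOn (fun t => u (γ t)) (Icc 0 L) := by
  set P : ℝ → ℝ := fun x => ∫ r in 0..x, g (γ r)
  have hP : ContinuousOn P (Icc 0 L) := by
    have := intervalIntegral.continuousOn_primitive_interval
      (uIcc_of_le hL ▸ (intervalIntegrable_iff_integrableOn_Icc_of_le hL).1 hg)
    rwa [uIcc_of_le hL] at this
  have hdom : ∀ a ∈ Icc 0 L, ∀ b ∈ Icc 0 L, dist (u (γ b)) (u (γ a)) ≤ dist (P b) (P a) := by
    have hmono : ∀ a ∈ Icc 0 L, ∀ b ∈ Icc 0 L, a ≤ b →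
        dist (u (γ b)) (u (γ a)) ≤ dist (P b) (P a) := fun a ha b hb hab => by
      have hsub : ∀ c ∈ Icc 0 L, uIcc 0 c ⊆ uIcc 0 L := fun c hc =>
        uIcc_subset_uIcc left_mem_uIcc (uIcc_of_le hL ▸ hc)
      rw [Real.dist_eq, Real.dist_eq, intervalIntegral.integral_interval_sub_left
        (hg.mono_set (hsub b hb)) (hg.mono_set (hsub a ha))]
      exact (hug.abs_sub_le_integral hγ ha.1 hab hb.2).trans (le_abs_self _)
    intro a ha b hb
    rcases le_total a b with hab | hba
    · exact hmono a ha b hb hab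
    · rw [dist_comm, dist_comm (P b)]; exact hmono b hb a ha hba
  intro x hx
  rw [ContinuousWithinAt, tendsto_iff_dist_tendsto_zero]
  refine squeeze_zero' (Filter.Eventually.of_forall fun _ => dist_nonneg)
    (eventually_mem_nhdsWithin.mono fun y hy => hdom x hx y hy) ?_
  exact tendsto_iff_dist_tendsto_zero.1 (hP x hx)

theorem IsUpperGradient.truncation (hug : IsUpperGradient u g) (hg0 : ∀ x, 0 ≤ g x) (M : ℝ)
    {c₁ c₂ : ℝ} (hc₁ : 0 ≤ c₁) (hc₂ : 0 ≤ c₂) :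
    IsUpperGradient (fun x => c₁ * min (u x) M + c₂ * max (u x - M) 0)
      (fun x => (if u x ≤ M then c₁ else c₂) * g x) := by
  intro L γ hL hγ
  by_cases hg : IntervalIntegrable (fun r => g (γ r)) volume 0 L
  · exact abs_truncation_sub_le_integral hL (fun t => hg0 (γ t)) hg
      (hug.continuousOn_comp hL hγ hg) (fun s t hs hst htL => hug.abs_sub_le_integral hγ hs hst htL)
      hc₁ hc₂
  -- otherwise the integral is junk `0`, which forces `u (γ L) = u (γ 0)`
  have hend : u (γ L) = u (γ 0) := by
    have := hug L γ hL hγ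
    rw [intervalIntegral.integral_undef hg] at this
    exact sub_eq_zero.1 (abs_nonpos_iff.1 this)
  simp only [hend, sub_self, abs_zero]
  exact intervalIntegral.integral_nonneg hL fun t _ =>
    mul_nonneg (by split_ifs <;> assumption) (hg0 (γ t))

end UpperGradient

theorem LowerSemicontinuousOn.isOpen_sep_lt {X : Type*} [TopologicalSpace X] {u : X → ℝ}
    {Ω : Set X} (hu : LowerSemicontinuousOn u Ω) (hΩ : IsOpen Ω) (M : ℝ) :
    IsOpen {x ∈ Ω | M < u x} := by
  obtain ⟨O, hO, hΩO⟩ := lowerSemicontinuousOn_iff_preimage_Ioi.1 hu M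
  exact (show {x ∈ Ω | M < u x} = Ω ∩ O from hΩO) ▸ hΩ.inter hO

theorem eq_mul_add_of_forall_add_le_rpow {p m F P : ℝ} (hp : p ≠ 0) (hm0 : 0 < m) (hm1 : m < 1)
    (h : ∀ a ∈ Icc (0 : ℝ) 1, F + P ≤ (a / m) ^ p * F + ((1 - a) / (1 - m)) ^ p * P) :
    F = m * (F + P) := by
  have h1m : 1 - m ≠ 0 := by linarith
  set G : ℝ → ℝ := fun a => (a / m) ^ p * F + ((1 - a) / (1 - m)) ^ p * P
  have hloc : IsLocalMin G m := by
    filter_upwards [Icc_mem_nhds hm0 hm1] with a ha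
    simpa [G, hm0.ne', h1m] using h a ha
  have h₁ := ((hasDerivAt_id m).div_const m).rpow_const (p := p) (Or.inl (by simp [hm0.ne']))
  have h₂ := (((hasDerivAt_id m).const_sub 1).div_const (1 - m)).rpow_const (p := p)
    (Or.inl (by simp [h1m]))
  have hkey := hloc.hasDerivAt_eq_zero ((h₁.mul_const F).add (h₂.mul_const P))
  simp only [id, div_self hm0.ne', div_self h1m, Real.one_rpow, mul_one] at hkey
  field_simp at hkey
  rw [mul_zero, mul_eq_zero] at hkey
  linear_combination hkey.resolve_left hp

theorem ofReal_le_rpow_div_of_le_rpow_mul {m p : ℝ} {K C : ℝ≥0∞} (hm : 0 < m) (hp : 1 < p)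
    (hK : K ≠ 0) (hC : C ≠ ⊤) (h : K ≤ ENNReal.ofReal (m ^ (1 - p)) * C) :
    ENNReal.ofReal m ≤ (C / K) ^ (1 / (p - 1)) := by
  have hmK : ENNReal.ofReal (m ^ (p - 1)) * K ≤ C := calc
    _ ≤ ENNReal.ofReal (m ^ (p - 1)) * (ENNReal.ofReal (m ^ (1 - p)) * C) := by gcongr
    _ = C := by
      rw [← mul_assoc, ← ENNReal.ofReal_mul (by positivity), ← Real.rpow_add hm,
        show p - 1 + (1 - p) = 0 by ring, Real.rpow_zero, ENNReal.ofReal_one, one_mul]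
  calc ENNReal.ofReal m = ENNReal.ofReal (m ^ (p - 1)) ^ (1 / (p - 1)) := by
        rw [← ENNReal.ofReal_rpow_of_pos hm, ← ENNReal.rpow_mul,
          mul_one_div_cancel (by linarith), ENNReal.rpow_one]
    _ ≤ (C / K) ^ (1 / (p - 1)) :=
      ENNReal.rpow_le_rpow ((ENNReal.le_div_iff_mul_le (Or.inl hK) (Or.inr hC)).2 hmK)
        (one_div_nonneg.2 (by linarith))

section Energy

variable {X : Type*} [MeasurableSpace X] {μ : Measure X} {p : ℝ} {Ω : Set X} {u g : X → ℝ}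
  {M c₁ c₂ : ℝ}

noncomputable def pEnergy (μ : Measure X) (p : ℝ) (g : X → ℝ) (s : Set X) : ℝ≥0∞ :=
  ∫⁻ x in s, ENNReal.ofReal (g x ^ p) ∂μ

theorem pEnergy_sublevel_add_superlevel (hT : MeasurableSet {x ∈ Ω | M < u x}) :
    pEnergy μ p g {x ∈ Ω | u x ≤ M} + pEnergy μ p g {x ∈ Ω | M < u x} = pEnergy μ p g Ω := by
  rw [pEnergy, pEnergy, pEnergy, ← lintegral_inter_add_sdiff _ Ω hT, add_comm]
  congr 3 <;> ext x <;> simp +contextual [not_lt]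

theorem pEnergy_truncation (hΩ : MeasurableSet Ω) (hT : MeasurableSet {x ∈ Ω | M < u x})
    (hg0 : ∀ x, 0 ≤ g x) (hc₁ : 0 ≤ c₁) (hc₂ : 0 ≤ c₂) :
    pEnergy μ p (fun x => (if u x ≤ M then c₁ else c₂) * g x) Ω
      = ENNReal.ofReal (c₁ ^ p) * pEnergy μ p g {x ∈ Ω | u x ≤ M}
        + ENNReal.ofReal (c₂ ^ p) * pEnergy μ p g {x ∈ Ω | M < u x} := by
  have hS : MeasurableSet {x ∈ Ω | u x ≤ M} := by
    convert hΩ.diff hT using 1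
    ext x; simp +contextual [not_lt]
  rw [← pEnergy_sublevel_add_superlevel hT, pEnergy, pEnergy, pEnergy, pEnergy,
    ← lintegral_const_mul' _ _ ENNReal.ofReal_ne_top,
    ← lintegral_const_mul' _ _ ENNReal.ofReal_ne_top]
  congr 1 <;> refine setLIntegral_congr_fun (by assumption) fun x hx => ?_
  · rw [if_pos hx.2, Real.mul_rpow hc₁ (hg0 x), ENNReal.ofReal_mul (by positivity)]
  · rw [if_neg (not_le.2 hx.2), Real.mul_rpow hc₂ (hg0 x), ENNReal.ofReal_mul (by positivity)]

end Energy

section Capacity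

variable {X : Type*} [MetricSpace X] [MeasurableSpace X] {μ : Measure X} {p : ℝ}
  {Ω E A : Set X} {u g : X → ℝ} {M c₁ c₂ : ℝ}

theorem varCap_le_pEnergy (hadm : (∀ x ∈ E, u x = 1) ∧ ∀ x ∉ Ω, u x = 0)
    (hug : IsUpperGradient u g) (hg0 : ∀ x, 0 ≤ g x) : varCap p μ E Ω ≤ pEnergy μ p g Ω :=
  iInf₂_le_of_le u hadm (iInf₂_le_of_le g ⟨hug, hg0⟩ le_rfl)

theorem varCap_le_truncation (hΩ : MeasurableSet Ω) (hT : MeasurableSet {x ∈ Ω | M < u x})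
    (hug : IsUpperGradient u g) (hg0 : ∀ x, 0 ≤ g x) (hc₁ : 0 ≤ c₁) (hc₂ : 0 ≤ c₂)
    (hadm : (∀ x ∈ E, c₁ * min (u x) M + c₂ * max (u x - M) 0 = 1) ∧
      ∀ x ∉ Ω, c₁ * min (u x) M + c₂ * max (u x - M) 0 = 0) :
    varCap p μ E Ω ≤ ENNReal.ofReal (c₁ ^ p) * pEnergy μ p g {x ∈ Ω | u x ≤ M}
        + ENNReal.ofReal (c₂ ^ p) * pEnergy μ p g {x ∈ Ω | M < u x} :=
  pEnergy_truncation hΩ hT hg0 hc₁ hc₂ ▸ varCap_le_pEnergy hadm (hug.truncation hg0 M hc₁ hc₂)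
    fun x => mul_nonneg (by split_ifs <;> assumption) (hg0 x)

theorem pEnergy_sublevel_le_mul (hp : p ≠ 0) (hΩ : MeasurableSet Ω)
    (hT : MeasurableSet {x ∈ Ω | M < u x}) (hadm : (∀ x ∈ E, u x = 1) ∧ ∀ x ∉ Ω, u x = 0)
    (hug : IsUpperGradient u g) (hg0 : ∀ x, 0 ≤ g x) (hmin : pEnergy μ p g Ω = varCap p μ E Ω)
    (hfin : varCap p μ E Ω ≠ ⊤) (hM : 0 < M) :
    pEnergy μ p g {x ∈ Ω | u x ≤ M} ≤ ENNReal.ofReal M * pEnergy μ p g Ω := by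
  rcases le_or_gt 1 M with hM1 | hM1
  · exact (lintegral_mono_set (sep_subset _ _)).trans
      (le_mul_of_one_le_left' (ENNReal.one_le_ofReal.2 hM1))
  set φ := pEnergy μ p g {x ∈ Ω | u x ≤ M}
  set ψ := pEnergy μ p g {x ∈ Ω | M < u x}
  have hsum : φ + ψ = pEnergy μ p g Ω := pEnergy_sublevel_add_superlevel hT
  have hφψ : φ + ψ ≠ ⊤ := hsum ▸ hmin ▸ hfin
  have hφ : φ ≠ ⊤ := (ENNReal.add_ne_top.1 hφψ).1
  have hψ : ψ ≠ ⊤ := (ENNReal.add_ne_top.1 hφψ).2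
  have hopt : ∀ a ∈ Icc (0 : ℝ) 1, φ.toReal + ψ.toReal
      ≤ (a / M) ^ p * φ.toReal + ((1 - a) / (1 - M)) ^ p * ψ.toReal := by
    intro a ha
    have hc₁ : 0 ≤ a / M := div_nonneg ha.1 hM.le
    have hc₂ : 0 ≤ (1 - a) / (1 - M) := div_nonneg (sub_nonneg.2 ha.2) (sub_nonneg.2 hM1.le)
    have hcomp := varCap_le_truncation (p := p) (μ := μ) hΩ hT hug hg0 hc₁ hc₂
      ⟨fun x hx => by
        rw [hadm.1 x hx, min_eq_right hM1.le, max_eq_left (by linarith)]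
        field_simp; ring,
      fun x hx => by
        rw [hadm.2 x hx, min_eq_left hM.le, max_eq_right (by linarith)]
        ring⟩
    rw [← hmin, ← hsum] at hcomp
    have h := ENNReal.toReal_mono (by finiteness) hcomp
    rwa [ENNReal.toReal_add hφ hψ, ENNReal.toReal_add (by finiteness) (by finiteness),
      ENNReal.toReal_mul, ENNReal.toReal_mul, ENNReal.toReal_ofReal (by positivity),
      ENNReal.toReal_ofReal (by positivity)] at h
  have hφM := eq_mul_add_of_forall_add_le_rpow hp hM hM1 hopt
  refine le_of_eq ?_
  calc φ = ENNReal.ofReal φ.toReal := (ENNReal.ofReal_toReal hφ).symm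
    _ = ENNReal.ofReal M * (φ + ψ) := by
      rw [hφM, ENNReal.ofReal_mul hM.le, ← ENNReal.toReal_add hφ hψ, ENNReal.ofReal_toReal hφψ]
    _ = ENNReal.ofReal M * pEnergy μ p g Ω := by rw [hsum]

theorem varCap_le_rpow_mul_varCap [OpensMeasurableSpace X] (hp : 1 < p) (hΩ : IsOpen Ω)
    (hadm : (∀ x ∈ E, u x = 1) ∧ ∀ x ∉ Ω, u x = 0) (hug : IsUpperGradient u g)
    (hg0 : ∀ x, 0 ≤ g x) (hu : LowerSemicontinuousOn u Ω)
    (hmin : pEnergy μ p g Ω = varCap p μ E Ω) (hfin : varCap p μ E Ω ≠ ⊤) (hM : 0 < M)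
    (hAM : ∀ x ∈ A, M ≤ u x) :
    varCap p μ A Ω ≤ ENNReal.ofReal (M ^ (1 - p)) * varCap p μ E Ω := by
  have hT := (hu.isOpen_sep_lt hΩ M).measurableSet
  calc varCap p μ A Ω
      ≤ ENNReal.ofReal (M⁻¹ ^ p) * pEnergy μ p g {x ∈ Ω | u x ≤ M}
        + ENNReal.ofReal (0 ^ p) * pEnergy μ p g {x ∈ Ω | M < u x} :=
        varCap_le_truncation hΩ.measurableSet hT hug hg0 (inv_nonneg.2 hM.le) le_rfl
          ⟨fun x hx => by rw [min_eq_right (hAM x hx)]; field_simp; ring,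
            fun x hx => by rw [hadm.2 x hx, min_eq_left hM.le]; ring⟩
    _ = ENNReal.ofReal (M ^ (-p)) * pEnergy μ p g {x ∈ Ω | u x ≤ M} := by
        rw [Real.zero_rpow (by linarith), ENNReal.ofReal_zero, zero_mul, add_zero,
          Real.inv_rpow hM.le, ← Real.rpow_neg hM.le]
    _ ≤ ENNReal.ofReal (M ^ (-p)) * (ENNReal.ofReal M * pEnergy μ p g Ω) := by
        gcongr
        exact pEnergy_sublevel_le_mul (by linarith) hΩ.measurableSet hT hadm hug hg0 hmin hfin hM
    _ = ENNReal.ofReal (M ^ (1 - p)) * varCap p μ E Ω := by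
        rw [hmin, ← mul_assoc, ← ENNReal.ofReal_mul (by positivity), ← Real.rpow_add_one hM.ne',
          neg_add_eq_sub]

end Capacity

theorem inf_potential_le_general
    {X : Type*} [MetricSpace X] [MeasurableSpace X] [BorelSpace X]
    (μ : Measure X) (p : ℝ) (hp : 1 < p)
    (Ω : Set X) (hΩo : IsOpen Ω)
    (A E : Set X)
    (hcapA : 0 < varCap p μ A Ω) (hcapE : varCap p μ E Ω < ⊤)
    (uE gE : X → ℝ)
    (hadm : (∀ x ∈ E, uE x = 1) ∧ ∀ x ∉ Ω, uE x = 0)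
    (hug : IsUpperGradient uE gE) (hg0 : ∀ x, 0 ≤ gE x)
    (hlsc : LowerSemicontinuousOn uE Ω)
    (hmin : ∫⁻ x in Ω, ENNReal.ofReal (gE x ^ p) ∂μ = varCap p μ E Ω) :
    ENNReal.ofReal (sInf (uE '' A)) ≤ (varCap p μ E Ω / varCap p μ A Ω) ^ (1/(p-1)) := by
  set m := sInf (uE '' A)
  rcases le_or_gt m 0 with hm | hm
  · rw [ENNReal.ofReal_of_nonpos hm]
    exact zero_le
  have hbdd : BddBelow (uE '' A) := by
    by_contra h
    exact hm.ne' (Real.sInf_of_not_bddBelow h)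
  exact ofReal_le_rpow_div_of_le_rpow_mul hm hp hcapA.ne' hcapE.ne <|
    varCap_le_rpow_mul_varCap hp hΩo hadm hug hg0 hlsc hmin hcapE.ne hm
      fun x hx => csInf_le hbdd (mem_image_of_mem uE hx)

/-- Lemma 5.1. If `A, E ⊆ Ω`, `cap_p(A,Ω) > 0` and `cap_p(E,Ω) < ∞`,
then the capacitary potential `u_E` of `E` in `Ω` satisfies
`inf_A u_E ≤ (cap_p(E,Ω)/cap_p(A,Ω))^{1/(p-1)}`. -/
theorem inf_potential_le
    {X : Type*} [MetricSpace X] [MeasurableSpace X] [BorelSpace X] [CompleteSpace X]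
    (μ : Measure X) (p : ℝ) (hp : 1 < p)
    (hunb : ¬ Bornology.IsBounded (Set.univ : Set X))
    (hdoub : IsDoubling μ) (hPI : SupportsPoincare p μ)
    (Ω : Set X) (hΩo : IsOpen Ω) (hΩb : Bornology.IsBounded Ω) (hΩne : Ω.Nonempty)
    (A E : Set X) (hA : A ⊆ Ω) (hE : E ⊆ Ω)
    (hcapA : 0 < varCap p μ A Ω) (hcapE : varCap p μ E Ω < ⊤)
    (uE gE : X → ℝ)
    (hadm : (∀ x ∈ E, uE x = 1) ∧ ∀ x ∉ Ω, uE x = 0)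
    (hug : IsUpperGradient uE gE) (hg0 : ∀ x, 0 ≤ gE x)
    (hlsc : LowerSemicontinuousOn uE Ω)
    (hmin : ∫⁻ x in Ω, ENNReal.ofReal (gE x ^ p) ∂μ = varCap p μ E Ω) :
    ENNReal.ofReal (sInf (uE '' A)) ≤ (varCap p μ E Ω / varCap p μ A Ω) ^ (1/(p-1)) :=
  inf_potential_le_general μ p hp Ω hΩo A E hcapA hcapE uE gE hadm hug hg0 hlsc hmin
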